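/- There exists a constant C > 0 such that for every integer n ≥ 2 there is a distance labeling scheme for caterpillars on n vertices with all labels of length at most 2·log₂ n + C. Precisely: there exists a decoder d : List Bool → List Bool → ℕ such that for every caterpillar G on Fin n there exists an encoder e : Fin n → List Bool with d (e u) (e v) = G.dist u v for all u, v, and (e u).length ≤ 2·log₂ n + C for all u. -/

import Mathlib

/-!
Every vertex `v` has an anchor `s v` on the spine: itself if it lies on the spine, its unique
neighbour if it is a leaf (that neighbour cannot be a leaf too, as the tree is connected and has
a spine vertex). For `u ≠ v`, `dist u v = |i - j| + [u leaf] + [v leaf]`, where `i`, `j` are the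
spine positions of the anchors, since in a tree the spine path between anchors is the geodesic.
So a vertex label made of the leaf bit, the anchor's position and the vertex's own index, each
of `⌊log₂ n⌋ + 1` bits, determines distances.
-/

/-- A caterpillar on `Fin n`: a tree in which the non-leaf vertices form a path
(the spine). Formally: a tree together with an injective path `p : Fin m → Fin n`
(`m ≥ 1`) of consecutively adjacent vertices such that every vertex outside the
range of `p` has degree 1. -/
def IsCaterpillar {n : ℕ} (G : SimpleGraph (Fin n)) : Prop :=
  G.IsTree ∧ ∃ m : ℕ, 1 ≤ m ∧ ∃ p : Fin m → Fin n, Function.Injective p ∧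
    (∀ i : Fin m, ∀ h : (i : ℕ) + 1 < m, G.Adj (p i) (p ⟨(i : ℕ) + 1, h⟩)) ∧
    ∀ v : Fin n, v ∉ Set.range p → (G.neighborSet v).ncard = 1

namespace SimpleGraph

variable {V : Type*} {G : SimpleGraph V} {u v w : V}

lemma IsAcyclic.length_eq_dist (hG : G.IsAcyclic) {W : G.Walk u v} (hW : W.IsPath) :
    W.length = G.dist u v := by
  obtain ⟨q, hq, hql⟩ := W.reachable.exists_path_of_dist
  have : (⟨W, hW⟩ : G.Path u v) = ⟨q, hq⟩ := (hG.subsingleton_path u v).elim _ _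
  rw [← hql, show W = q from congrArg Subtype.val this]

lemma dist_eq_dist_add_one_of_neighborSet_eq_singleton (hG : G.Connected)
    (hv : G.neighborSet v = {w}) (huv : u ≠ v) : G.dist u v = G.dist u w + 1 := by
  have hvw : G.Adj v w := by simp [← mem_neighborSet, hv]
  refine le_antisymm ?_ ?_
  · calc G.dist u v ≤ G.dist u w + G.dist w v := hG.dist_triangle
      _ = G.dist u w + 1 := by rw [dist_eq_one_iff_adj.mpr hvw.symm]
  · obtain ⟨W, hW⟩ := hG.exists_walk_length_eq_dist v u
    cases W with
    | nil => exact absurd rfl huv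
    | @cons _ x _ hvx W' =>
      obtain rfl : x = w := by simpa [hv] using (mem_neighborSet G v x).mpr hvx
      calc G.dist u x + 1 = G.dist x u + 1 := by rw [dist_comm]
        _ ≤ (Walk.cons hvx W').length := by simpa using dist_le W'
        _ = G.dist u v := by rw [hW, dist_comm]

lemma eq_or_eq_of_neighborSet_eq_singleton (hG : G.Connected) (hv : G.neighborSet v = {w})
    (hw : G.neighborSet w = {v}) (x : V) : x = v ∨ x = w := by
  by_contra hx
  obtain ⟨d, -, hd, hd'⟩ := (hG v x).some.exists_boundary_dart {v, w} (by simp) hx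
  have hadj := d.adj
  rcases hd with hd | hd <;> rw [← mem_neighborSet, hd] at hadj <;> simp_all

variable {m : ℕ} {p : Fin m → V}

lemma exists_isPath_of_chain (hp : Function.Injective p)
    (hadj : ∀ i : Fin m, ∀ h : (i : ℕ) + 1 < m, G.Adj (p i) (p ⟨(i : ℕ) + 1, h⟩)) (i : Fin m) :
    ∀ (k : ℕ) (hk : k < m), (i : ℕ) ≤ k → ∃ W : G.Walk (p i) (p ⟨k, hk⟩),
      W.IsPath ∧ W.length = k - i ∧ ∀ x ∈ W.support, ∃ l : Fin m, (l : ℕ) ≤ k ∧ p l = x := by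
  intro k
  induction k with
  | zero =>
    intro hk hi
    obtain rfl : i = ⟨0, hk⟩ := Fin.ext (Nat.le_zero.mp hi)
    exact ⟨.nil, .nil, rfl, fun x hx => ⟨_, le_rfl, (List.mem_singleton.mp hx).symm⟩⟩
  | succ k ih =>
    intro hk hi
    rcases hi.eq_or_lt with hi | hi
    · obtain rfl : i = ⟨k + 1, hk⟩ := Fin.ext hi
      exact ⟨.nil, .nil, by simp, fun x hx => ⟨_, le_rfl, (List.mem_singleton.mp hx).symm⟩⟩
    obtain ⟨W, hW, hlen, hsupp⟩ := ih (by omega) (by omega)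
    have hnew : p ⟨k + 1, hk⟩ ∉ W.support := fun hmem => by
      obtain ⟨l, hl, hpl⟩ := hsupp _ hmem
      have := congrArg Fin.val (hp hpl)
      simp at this; omega
    refine ⟨W.concat (hadj ⟨k, by omega⟩ hk), hW.concat hnew _, by simp; omega, ?_⟩
    simp only [Walk.support_concat, List.mem_append, List.mem_singleton]
    rintro x (hx | rfl)
    · obtain ⟨l, hl, hpl⟩ := hsupp x hx
      exact ⟨l, by omega, hpl⟩
    · exact ⟨_, le_rfl, rfl⟩

lemma IsAcyclic.dist_eq_natDist_of_chain (hG : G.IsAcyclic) (hp : Function.Injective p)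
    (hadj : ∀ i : Fin m, ∀ h : (i : ℕ) + 1 < m, G.Adj (p i) (p ⟨(i : ℕ) + 1, h⟩)) (i j : Fin m) :
    G.dist (p i) (p j) = Nat.dist i j := by
  wlog hij : i ≤ j generalizing i j
  · rw [dist_comm, Nat.dist_comm, this j i (le_of_not_ge hij)]
  obtain ⟨W, hW, hlen, -⟩ := exists_isPath_of_chain hp hadj i j j.isLt hij
  rw [← hG.length_eq_dist hW, hlen, Nat.dist_eq_sub_of_le hij]

variable {S : Set V}

lemma exists_anchor (hG : G.Connected) (hS : S.Nonempty)
    (hleaf : ∀ v ∉ S, (G.neighborSet v).ncard = 1) :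
    ∃ s : V → V, (∀ v, s v ∈ S) ∧ (∀ v ∈ S, s v = v) ∧ ∀ v ∉ S, G.neighborSet v = {s v} := by
  have hnbr : ∀ v ∉ S, ∃ w ∈ S, G.neighborSet v = {w} := by
    intro v hv
    obtain ⟨w, hw⟩ := Set.ncard_eq_one.mp (hleaf v hv)
    refine ⟨w, by_contra fun hwS => ?_, hw⟩
    obtain ⟨v', hv'⟩ := Set.ncard_eq_one.mp (hleaf w hwS)
    have hvw : v ∈ G.neighborSet w := G.adj_symm (by simp [← mem_neighborSet, hw])
    obtain rfl : v = v' := by rwa [hv'] at hvw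
    obtain ⟨x, hx⟩ := hS
    rcases eq_or_eq_of_neighborSet_eq_singleton hG hw hv' x with rfl | rfl <;> contradiction
  classical
  choose f hfS hf using hnbr
  refine ⟨fun v => if h : v ∈ S then v else f v h, fun v => ?_, fun v hv => ?_, fun v hv => ?_⟩
  · by_cases hv : v ∈ S <;> simp [hv, hfS]
  · simp [hv]
  · simp [hv, hf]

lemma dist_eq_dist_anchor_add [DecidablePred (· ∈ S)] (hG : G.Connected) {s : V → V}
    (hsS : ∀ v, s v ∈ S) (hs : ∀ v ∈ S, s v = v) (hleaf : ∀ v ∉ S, G.neighborSet v = {s v})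
    (huv : u ≠ v) :
    G.dist u v = G.dist (s u) (s v) + (decide (u ∉ S)).toNat + (decide (v ∉ S)).toNat := by
  have hstep : ∀ x y, (x ∉ S → y ≠ x) → G.dist y x = G.dist y (s x) + (decide (x ∉ S)).toNat := by
    intro x y hyx
    by_cases hx : x ∈ S
    · simp [hx, hs x hx]
    · simp [hx, dist_eq_dist_add_one_of_neighborSet_eq_singleton hG (hleaf x hx) (hyx hx)]
  calc G.dist u v = G.dist v (s u) + (decide (u ∉ S)).toNat := by
        rw [dist_comm, hstep u v fun _ => huv.symm]
    _ = G.dist (s u) (s v) + (decide (v ∉ S)).toNat + (decide (u ∉ S)).toNat := by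
        rw [dist_comm, hstep v (s u) fun hv h => hv (h ▸ hsS u)]
    _ = _ := by ring

end SimpleGraph

def toBits : ℕ → ℕ → List Bool
  | 0, _ => []
  | L + 1, k => decide (k % 2 = 1) :: toBits L (k / 2)

def ofBits : List Bool → ℕ
  | [] => 0
  | b :: l => b.toNat + 2 * ofBits l

@[simp]
lemma length_toBits (L k : ℕ) : (toBits L k).length = L := by
  induction L generalizing k with
  | zero => rfl
  | succ L ih => simp [toBits, ih]

lemma ofBits_toBits {L k : ℕ} (h : k < 2 ^ L) : ofBits (toBits L k) = k := by
  induction L generalizing k with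
  | zero => simp_all [toBits, ofBits]
  | succ L ih =>
    rw [toBits, ofBits, ih (by omega)]
    rcases Nat.mod_two_eq_zero_or_one k with hk | hk <;> simp [hk] <;> omega

section Labels

variable (L : ℕ)

-- The last field, the vertex's own index, only separates leaves hanging from the same spine vertex.
def caterpillarLabel (leaf : Bool) (pos id : ℕ) : List Bool :=
  leaf :: (toBits L pos ++ toBits L id)

def caterpillarDecoder (x y : List Bool) : ℕ :=
  if x = y then 0
  else Nat.dist (ofBits (x.tail.take L)) (ofBits (y.tail.take L)) +
    (x.headD false).toNat + (y.headD false).toNat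

variable {L}

lemma length_caterpillarLabel (b : Bool) (i k : ℕ) :
    (caterpillarLabel L b i k).length = 2 * L + 1 := by
  simp [caterpillarLabel]; ring

lemma eq_of_caterpillarLabel_eq {b b' : Bool} {i i' k k' : ℕ} (hk : k < 2 ^ L) (hk' : k' < 2 ^ L)
    (h : caterpillarLabel L b i k = caterpillarLabel L b' i' k') : k = k' := by
  simp only [caterpillarLabel, List.cons.injEq] at h
  have := List.append_inj_right h.2 (by simp)
  rw [← ofBits_toBits hk, this, ofBits_toBits hk']

lemma caterpillarDecoder_label {b b' : Bool} {i i' k k' : ℕ} (hi : i < 2 ^ L) (hi' : i' < 2 ^ L)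
    (hne : caterpillarLabel L b i k ≠ caterpillarLabel L b' i' k') :
    caterpillarDecoder L (caterpillarLabel L b i k) (caterpillarLabel L b' i' k') =
      Nat.dist i i' + b.toNat + b'.toNat := by
  rw [caterpillarDecoder, if_neg hne]
  simp [caterpillarLabel, ofBits_toBits, hi, hi']

end Labels

theorem caterpillar_simple_upper_bound :
    ∃ C : ℝ, 0 < C ∧ ∀ n : ℕ, 2 ≤ n →
      ∃ d : List Bool → List Bool → ℕ,
        ∀ G : SimpleGraph (Fin n), IsCaterpillar G →
          ∃ e : Fin n → List Bool,
            (∀ u v : Fin n, d (e u) (e v) = G.dist u v) ∧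
            ∀ u : Fin n, ((e u).length : ℝ) ≤ 2 * Real.logb 2 n + C := by
  refine ⟨3, by norm_num, fun n _ => ⟨caterpillarDecoder (Nat.log 2 n + 1), fun G hG => ?_⟩⟩
  classical
  obtain ⟨hT, m, hm, p, hp, hadj, hleaf⟩ := hG
  obtain ⟨s, hsS, hs, hsleaf⟩ :=
    SimpleGraph.exists_anchor hT.connected ⟨_, Set.mem_range_self ⟨0, hm⟩⟩ hleaf
  choose a ha using hsS
  have hbound : ∀ k, k < n → k < 2 ^ (Nat.log 2 n + 1) :=
    fun k hk => hk.trans (Nat.lt_pow_succ_log_self one_lt_two n)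
  have hmn : m ≤ n := by simpa using Fintype.card_le_of_injective p hp
  let e u := caterpillarLabel (Nat.log 2 n + 1) (decide (u ∉ Set.range p)) (a u) u
  refine ⟨e, fun u v => ?_, fun u => ?_⟩
  · by_cases huv : u = v
    · simp [huv, caterpillarDecoder]
    have hne : e u ≠ e v := fun h =>
      huv (Fin.ext (eq_of_caterpillarLabel_eq (hbound _ u.isLt) (hbound _ v.isLt) h))
    rw [caterpillarDecoder_label (hbound _ ((a u).isLt.trans_le hmn))
      (hbound _ ((a v).isLt.trans_le hmn)) hne,
      SimpleGraph.dist_eq_dist_anchor_add hT.connected (fun v => ha v ▸ Set.mem_range_self _) hs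
        hsleaf huv, ← ha, ← ha, hT.isAcyclic.dist_eq_natDist_of_chain hp hadj]
  · rw [length_caterpillarLabel]
    have hlog : (Nat.log 2 n : ℝ) ≤ Real.logb 2 n := by exact_mod_cast Real.natLog_le_logb n 2
    push_cast
    linarith
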